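/- arXiv:math/0608007 — 2 statements merged into one kernel-verified Lean document; each statement's English description precedes it below -/
import Mathlib

section
/- There exists a constant C depending only on the dimension d such that, for every spin configuration σ ∈ {−1,+1}^Λ, the per-site error between the microscopic Hamiltonian and the first coarse-grained approximation satisfies (1/N) |H_N(σ) − H̄⁰(F(σ))| ≤ C (q/L) ‖∇V‖_∞, where H̄⁰(η) = E[H_N | F = η]. -/
open Finset

/-- Real spin value of a Boolean spin variable (`true ↦ +1`, `false ↦ −1`). -/
def spin (b : Bool) : ℝ := if b then 1 else -1

/-- Integer spin value of a Boolean spin variable. -/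
def spinZ (b : Bool) : ℤ := if b then 1 else -1

/-- The microscopic lattice site of the coarse cell `C_k` with offset `a`, i.e. the point
`q·k + a` of `Λ = (ℤ/nℤ)ᵈ` with `n = m·q`. -/
def cellPoint (d m q : ℕ) (k : Fin d → ZMod m) (a : Fin d → Fin q) :
    Fin d → ZMod (m * q) :=
  fun i => ((q * (k i).val + (a i).val : ℕ) : ZMod (m * q))

/-- The blocking map `F`: the coarse spin `η(k) = Σ_{x ∈ C_k} σ(x)`. -/
def blockF (d m q : ℕ) (σ : (Fin d → ZMod (m * q)) → Bool)
    (k : Fin d → ZMod m) : ℤ :=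
  ∑ a : Fin d → Fin q, spinZ (σ (cellPoint d m q k a))

/-- The fiber `{σ : F(σ) = η}` of the blocking map over a coarse configuration `η`. -/
def fiber (d m q : ℕ) [NeZero m] [NeZero (m * q)]
    (η : (Fin d → ZMod m) → ℤ) : Finset ((Fin d → ZMod (m * q)) → Bool) :=
  Finset.univ.filter (fun σ => blockF d m q σ = η)

/-- The microscopic Hamiltonian
`H_N(σ) = −(1/2) Σ_x Σ_{y ≠ x} J(x−y) σ(x)σ(y) + h Σ_x σ(x)` on `Λ = (ℤ/nℤ)ᵈ`. -/
noncomputable def ham (d n : ℕ) [NeZero n] (J : (Fin d → ZMod n) → ℝ) (h : ℝ)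
    (σ : (Fin d → ZMod n) → Bool) : ℝ :=
  -(1 / 2) * ∑ x : Fin d → ZMod n, ∑ y ∈ Finset.univ.filter (fun y => y ≠ x),
      J (x - y) * (spin (σ x) * spin (σ y))
    + h * ∑ x : Fin d → ZMod n, spin (σ x)

/-- The centered representative `a/n ∈ (−1/2, 1/2]` of a coordinate `c ∈ ℤ/nℤ`
(here returned as the integer part `a ∈ (−n/2, n/2]`, as a real number). -/
noncomputable def cent (n : ℕ) (c : ZMod n) : ℝ :=
  if (c.val : ℝ) ≤ (n : ℝ) / 2 then (c.val : ℝ) else (c.val : ℝ) - (n : ℝ)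

/-- The centered representative `x̂ ∈ (−1/2, 1/2]ᵈ` of a torus lattice point `x`. -/
noncomputable def hat (d n : ℕ) (x : Fin d → ZMod n) : EuclideanSpace ℝ (Fin d) :=
  WithLp.toLp 2 (fun i => cent n (x i) / (n : ℝ))

/-- The interaction `J(x) = L⁻ᵈ V((n/L) x̂)` for `x ≠ 0`, `J(0) = 0`. -/
noncomputable def Jpot (d n : ℕ) (L : ℝ) (V : EuclideanSpace ℝ (Fin d) → ℝ)
    (x : Fin d → ZMod n) : ℝ :=
  if x = 0 then 0 else (1 / L ^ d) * V (((n : ℝ) / L) • hat d n x)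

/-!
Replace the coupling `J(x - y)` by the block-constant coupling `J(q (k - l))` for `x ∈ C_k`,
`y ∈ C_l`. Its Hamiltonian depends on `σ` only through `F(σ)`, so it is constant on the fiber of
`F(σ)`, and `H_N(σ)` differs from the fiber average of `H_N` by at most twice the uniform distance
between the two Hamiltonians, which is at most `N/2` times the row sum
`Σ_y |J(x - y) - J(q (k - l))|`. In this row sum the `Q` sites of the cell of `x` contribute
`O(‖∇V‖_∞ / Lᵈ)` each. For every other site, `x - y` and `q (k - l)` differ by less than `q` in
each coordinate, so the mean value theorem bounds the term by `O(q ‖∇V‖_∞ / Lᵈ⁺¹)`, and the term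
vanishes unless `y` lies within `L + q` of `x`, which leaves `O(Lᵈ)` sites.
-/

namespace ZMod

variable {n : ℕ}

lemma abs_valMinAbs_le_add (a b : ZMod n) :
    |(a + b).valMinAbs| ≤ |a.valMinAbs| + |b.valMinAbs| := by
  have : ((a + b).valMinAbs.natAbs : ℤ) ≤ (a.valMinAbs + b.valMinAbs).natAbs := by
    exact_mod_cast natAbs_valMinAbs_add_le a b
  rw [Int.natCast_natAbs, Int.natCast_natAbs] at this
  exact this.trans (abs_add_le _ _)

variable [NeZero n]

lemma abs_valMinAbs_mul_two_le (x : ZMod n) : |x.valMinAbs| * 2 ≤ n := by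
  have := x.valMinAbs_mem_Ioc
  rcases abs_cases x.valMinAbs with ⟨h, -⟩ | ⟨h, -⟩ <;> rw [h] <;> linarith [this.1, this.2]

lemma valMinAbs_intCast_of_abs_mul_two_lt {j : ℤ} (hj : |j| * 2 < n) :
    (j : ZMod n).valMinAbs = j := by
  have := abs_lt.1 (by rwa [abs_mul, abs_two] : |j * 2| < n)
  exact (valMinAbs_spec _ j).2 ⟨rfl, this.1, this.2.le⟩

lemma valMinAbs_sub_eq_or (a b : ZMod n) :
    (a - b).valMinAbs = a.valMinAbs - b.valMinAbs ∨
      n ≤ (|a.valMinAbs| + |(a - b).valMinAbs|) * 2 ∧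
        n ≤ (|b.valMinAbs| + |(a - b).valMinAbs|) * 2 := by
  refine or_iff_not_imp_left.2 fun hne => ?_
  have hdvd : (n : ℤ) ∣ a.valMinAbs - b.valMinAbs - (a - b).valMinAbs := by
    rw [← intCast_zmod_eq_zero_iff_dvd]
    push_cast [coe_valMinAbs]
    ring
  have hlarge : (n : ℤ) ≤ |a.valMinAbs - b.valMinAbs - (a - b).valMinAbs| :=
    not_lt.1 fun hlt => hne (by linarith [Int.eq_zero_of_abs_lt_dvd hdvd hlt])
  have := abs_sub (a.valMinAbs - b.valMinAbs) (a - b).valMinAbs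
  have := abs_sub a.valMinAbs b.valMinAbs
  have := abs_valMinAbs_mul_two_le a
  have := abs_valMinAbs_mul_two_le b
  constructor <;> linarith

lemma card_filter_abs_valMinAbs_sub_le (a : ZMod n) {T : ℝ} (hT : 0 ≤ T) :
    (#(univ.filter fun c : ZMod n => |((a - c).valMinAbs : ℝ)| ≤ T) : ℝ) ≤ 2 * T + 1 := by
  have hsub : univ.filter (fun c : ZMod n => |((a - c).valMinAbs : ℝ)| ≤ T) ⊆
      (Icc (-⌊T⌋) ⌊T⌋).image fun j : ℤ => a - j := by
    intro c hc
    rw [mem_filter, ← Int.cast_abs] at hc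
    refine mem_image.2 ⟨(a - c).valMinAbs, mem_Icc.2 (abs_le.1 (Int.le_floor.2 hc.2)), ?_⟩
    simp
  have hfloor := Int.floor_nonneg.2 hT
  calc (#(univ.filter fun c : ZMod n => |((a - c).valMinAbs : ℝ)| ≤ T) : ℝ)
      ≤ #(Icc (-⌊T⌋) ⌊T⌋) := by exact_mod_cast (card_le_card hsub).trans card_image_le
    _ = 2 * ⌊T⌋ + 1 := by
      rw [Int.card_Icc, ← Int.cast_natCast, Int.toNat_of_nonneg (by omega)]
      push_cast; ring
    _ ≤ 2 * T + 1 := by linarith [Int.floor_le T]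

end ZMod

section Gradient

variable {F : Type*} [NormedAddCommGroup F] [InnerProductSpace ℝ F] [CompleteSpace F]
  {f : F → ℝ} {C : ℝ}

lemma abs_sub_le_of_norm_gradient_le (hf : Differentiable ℝ f)
    (hC : ∀ z, ‖gradient f z‖ ≤ C) (a b : F) : |f a - f b| ≤ C * ‖a - b‖ := by
  have hfd : ∀ z ∈ Set.univ, ‖fderiv ℝ f z‖ ≤ C := fun z _ => by
    rw [← toDual_gradient, LinearIsometryEquiv.norm_map]; exact hC z
  simpa only [Real.norm_eq_abs] using convex_univ.norm_image_sub_le_of_norm_fderiv_le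
    (fun z _ => hf z) hfd (Set.mem_univ b) (Set.mem_univ a)

lemma abs_le_of_norm_gradient_le_of_eq_zero [Nontrivial F] (hf : Differentiable ℝ f)
    (hC : ∀ z, ‖gradient f z‖ ≤ C) (hsupp : ∀ z, 1 < ‖z‖ → f z = 0) (a : F) :
    |f a| ≤ 3 * C := by
  have hC0 : 0 ≤ C := (norm_nonneg _).trans (hC 0)
  rcases le_or_gt ‖a‖ 1 with ha | ha
  · -- compare with a point of norm `2`, where `f` vanishes
    obtain ⟨e, he⟩ := exists_norm_eq F (zero_le_two : (0 : ℝ) ≤ 2)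
    have hlip := abs_sub_le_of_norm_gradient_le hf hC a e
    rw [hsupp e (by rw [he]; norm_num), sub_zero] at hlip
    have := norm_sub_le a e
    nlinarith
  · rw [hsupp a ha, abs_zero]; positivity

end Gradient

lemma EuclideanSpace.norm_le_sqrt_card_mul {ι : Type*} [Fintype ι]
    (u : EuclideanSpace ℝ ι) {r : ℝ} (hr : 0 ≤ r) (hu : ∀ i, |u i| ≤ r) :
    ‖u‖ ≤ √(Fintype.card ι) * r := by
  rw [EuclideanSpace.norm_eq, ← Real.sqrt_sq hr, ← Real.sqrt_mul (Nat.cast_nonneg _)]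
  gcongr
  calc ∑ i, ‖u i‖ ^ 2 ≤ ∑ _i : ι, r ^ 2 := by
        gcongr with i; rw [Real.norm_eq_abs]; exact hu i
    _ = _ := by simp

lemma card_filter_forall_eq_prod {ι α : Type*} [Fintype ι] [DecidableEq ι] [Fintype α]
    (P : ι → α → Prop) [∀ i, DecidablePred (P i)] :
    #(univ.filter fun y : ι → α => ∀ i, P i (y i)) = ∏ i, #(univ.filter (P i)) := by
  rw [← Fintype.card_piFinset]
  congr 1
  ext y
  simp [Fintype.mem_piFinset]

lemma card_filter_forall_abs_valMinAbs_sub_le {d n : ℕ} [NeZero n] (x : Fin d → ZMod n)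
    {T : ℝ} (hT : 0 ≤ T) :
    (#(univ.filter fun y : Fin d → ZMod n => ∀ i, |((x i - y i).valMinAbs : ℝ)| ≤ T) : ℝ)
      ≤ (2 * T + 1) ^ d := by
  calc _ = ∏ i, (#(univ.filter fun c => |((x i - c).valMinAbs : ℝ)| ≤ T) : ℝ) := by
        rw [← Nat.cast_prod]
        congr 1
        convert card_filter_forall_eq_prod fun i c => |((x i - c).valMinAbs : ℝ)| ≤ T
    _ ≤ ∏ _i : Fin d, (2 * T + 1) :=
        prod_le_prod (fun _ _ => by positivity) fun i _ =>
          ZMod.card_filter_abs_valMinAbs_sub_le (x i) hT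
    _ = (2 * T + 1) ^ d := by simp

lemma abs_sum_sum_mul_le {ι : Type*} [Fintype ι] (A : ι → ι → ℝ) {R : ℝ}
    (hA : ∀ x, ∑ y, |A x y| ≤ R) (s : ι → ℝ) (hs : ∀ x, |s x| ≤ 1) :
    |∑ x, ∑ y, A x y * (s x * s y)| ≤ Fintype.card ι * R := by
  have hterm : ∀ x y, |A x y * (s x * s y)| ≤ |A x y| := fun x y => by
    rw [abs_mul, abs_mul]
    exact mul_le_of_le_one_right (abs_nonneg _)
      (mul_le_one₀ (hs x) (abs_nonneg _) (hs y))
  calc |∑ x, ∑ y, A x y * (s x * s y)| ≤ ∑ x, ∑ y, |A x y| :=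
        (abs_sum_le_sum_abs _ _).trans <| sum_le_sum fun x _ =>
          (abs_sum_le_sum_abs _ _).trans <| sum_le_sum fun y _ => hterm x y
    _ ≤ ∑ _x : ι, R := sum_le_sum fun x _ => hA x
    _ = Fintype.card ι * R := by simp

lemma abs_sub_sum_div_card_le {α : Type*} {s : Finset α} {f : α → ℝ} {a : α} {ε : ℝ}
    (ha : a ∈ s) (h : ∀ b ∈ s, |f a - f b| ≤ ε) :
    |f a - (∑ b ∈ s, f b) / #s| ≤ ε := by
  have hs : (0 : ℝ) < #s := by exact_mod_cast card_pos.2 ⟨a, ha⟩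
  have hmean : f a - (∑ b ∈ s, f b) / #s = (∑ b ∈ s, (f a - f b)) / #s := by
    rw [sum_sub_distrib, sum_const, nsmul_eq_mul]
    field_simp
  rw [hmean, abs_div, abs_of_pos hs, div_le_iff₀ hs, mul_comm]
  calc |∑ b ∈ s, (f a - f b)| ≤ ∑ b ∈ s, |f a - f b| := abs_sum_le_sum_abs _ _
    _ ≤ #s * ε := by simpa using sum_le_card_nsmul s _ ε h

lemma cent_eq_valMinAbs (n : ℕ) [NeZero n] (c : ZMod n) : cent n c = c.valMinAbs := by
  have : (c.val : ℝ) ≤ n / 2 ↔ c.val ≤ n / 2 := by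
    rw [le_div_iff₀ two_pos, Nat.le_div_two_iff_mul_two_le]; exact_mod_cast Iff.rfl
  rw [cent, ZMod.valMinAbs_def_pos]
  by_cases h : c.val ≤ n / 2 <;> simp only [this, h, if_true, if_false] <;> push_cast <;> rfl

/-- The point `(n/L) x̂` at which `V` is evaluated in `Jpot`. -/
noncomputable def scaledPos (d n : ℕ) (L : ℝ) (z : Fin d → ZMod n) :
    EuclideanSpace ℝ (Fin d) :=
  WithLp.toLp 2 fun i => ((z i).valMinAbs : ℝ) / L

section Interaction

variable {d n : ℕ} {L : ℝ} {V : EuclideanSpace ℝ (Fin d) → ℝ}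

lemma Jpot_zero : Jpot d n L V 0 = 0 := if_pos rfl

variable [NeZero n]

lemma Jpot_of_ne_zero {z : Fin d → ZMod n} (hz : z ≠ 0) :
    Jpot d n L V z = V (scaledPos d n L z) / L ^ d := by
  have hn : (n : ℝ) ≠ 0 := Nat.cast_ne_zero.2 (NeZero.ne n)
  have hpos : ((n : ℝ) / L) • hat d n z = scaledPos d n L z := by
    ext i
    simp only [hat, scaledPos, PiLp.smul_apply, smul_eq_mul, cent_eq_valMinAbs]
    field_simp
  rw [Jpot, if_neg hz, hpos, one_div_mul_eq_div]

lemma Jpot_eq_zero_of_lt_abs (hL : 0 < L) (hsupp : ∀ u, 1 < ‖u‖ → V u = 0)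
    {z : Fin d → ZMod n} (i : Fin d) (hi : L < |((z i).valMinAbs : ℝ)|) :
    Jpot d n L V z = 0 := by
  by_cases hz : z = 0
  · rw [hz, Jpot_zero]
  rw [Jpot_of_ne_zero hz, hsupp _, zero_div]
  calc 1 < |((z i).valMinAbs : ℝ)| / L := by rwa [one_lt_div hL]
    _ = |scaledPos d n L z i| := by simp [scaledPos, abs_div, abs_of_pos hL]
    _ ≤ ‖scaledPos d n L z‖ := by simpa using PiLp.norm_apply_le (scaledPos d n L z) i

variable {GV : ℝ}

lemma abs_Jpot_le (hV : Differentiable ℝ V) (hGV : ∀ u, ‖gradient V u‖ ≤ GV)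
    (hsupp : ∀ u, 1 < ‖u‖ → V u = 0) (hd : 1 ≤ d) (hL : 0 < L) (z : Fin d → ZMod n) :
    |Jpot d n L V z| ≤ 3 * GV / L ^ d := by
  have : Nonempty (Fin d) := ⟨⟨0, hd⟩⟩
  by_cases hz : z = 0
  · rw [hz, Jpot_zero, abs_zero]
    have := (norm_nonneg _).trans (hGV 0)
    positivity
  rw [Jpot_of_ne_zero hz, abs_div, abs_of_pos (pow_pos hL d)]
  gcongr
  exact abs_le_of_norm_gradient_le_of_eq_zero hV hGV hsupp _

/-- Off a wrap-around of the torus this is the Lipschitz bound for `V`; at a wrap-around both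
points are farther than `L` from the origin in some coordinate, so both terms vanish. -/
lemma abs_Jpot_sub_Jpot_le (hV : Differentiable ℝ V) (hGV : ∀ u, ‖gradient V u‖ ≤ GV)
    (hsupp : ∀ u, 1 < ‖u‖ → V u = 0) (hL : 0 < L) {δ : ℝ} (hδ : 0 ≤ δ)
    (hn : 2 * (L + δ) < n) {z w : Fin d → ZMod n} (hz : z ≠ 0) (hw : w ≠ 0)
    (hzw : ∀ i, |((z i - w i).valMinAbs : ℝ)| ≤ δ) :
    |Jpot d n L V z - Jpot d n L V w| ≤ GV * (√d * (δ / L)) / L ^ d := by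
  have hGV0 := (norm_nonneg _).trans (hGV 0)
  by_cases hwrap : ∃ i, (z i - w i).valMinAbs ≠ (z i).valMinAbs - (w i).valMinAbs
  · obtain ⟨i, hi⟩ := hwrap
    obtain ⟨hzi, hwi⟩ := ((z i).valMinAbs_sub_eq_or (w i)).resolve_left hi
    have hzi : (n : ℝ) ≤ (|((z i).valMinAbs : ℝ)| + |((z i - w i).valMinAbs : ℝ)|) * 2 := by
      exact_mod_cast hzi
    have hwi : (n : ℝ) ≤ (|((w i).valMinAbs : ℝ)| + |((z i - w i).valMinAbs : ℝ)|) * 2 := by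
      exact_mod_cast hwi
    have := hzw i
    rw [Jpot_eq_zero_of_lt_abs hL hsupp i (by linarith),
      Jpot_eq_zero_of_lt_abs hL hsupp i (by linarith), sub_zero, abs_zero]
    positivity
  push Not at hwrap
  rw [Jpot_of_ne_zero hz, Jpot_of_ne_zero hw, ← sub_div, abs_div, abs_of_pos (pow_pos hL d)]
  gcongr
  calc |V (scaledPos d n L z) - V (scaledPos d n L w)|
      ≤ GV * ‖scaledPos d n L z - scaledPos d n L w‖ :=
        abs_sub_le_of_norm_gradient_le hV hGV _ _
    _ ≤ GV * (√d * (δ / L)) := by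
      gcongr
      have hcoord : ∀ i, |(scaledPos d n L z - scaledPos d n L w) i| ≤ δ / L := fun i => by
        simp only [scaledPos, PiLp.sub_apply, ← sub_div, ← Int.cast_sub, ← hwrap i, abs_div,
          abs_of_pos hL]
        gcongr
        exact hzw i
      simpa using EuclideanSpace.norm_le_sqrt_card_mul _ (by positivity) hcoord

end Interaction

section Cells

variable (m q : ℕ)

def cellOf (c : ZMod (m * q)) : ZMod m := (c.val / q : ℕ)

variable [NeZero m]

lemma val_natCast_cell (k : ZMod m) (a : Fin q) :
    ((q * k.val + a.val : ℕ) : ZMod (m * q)).val = q * k.val + a.val := by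
  apply ZMod.val_cast_of_lt
  have := ZMod.val_lt k
  have := a.isLt
  nlinarith

lemma cellOf_natCast (k : ZMod m) (a : Fin q) :
    cellOf m q ((q * k.val + a.val : ℕ) : ZMod (m * q)) = k := by
  have hq : 0 < q := a.pos
  rw [cellOf, val_natCast_cell, Nat.mul_add_div hq, Nat.div_eq_of_lt a.isLt, add_zero,
    ZMod.natCast_zmod_val]

lemma cellOf_cellPoint {d : ℕ} (k : Fin d → ZMod m) (a : Fin d → Fin q) (i : Fin d) :
    cellOf m q (cellPoint d m q k a i) = k i :=
  cellOf_natCast m q (k i) (a i)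

variable [NeZero (m * q)]

noncomputable def cellEquiv : ZMod m × Fin q ≃ ZMod (m * q) :=
  Equiv.ofBijective (fun p => (q * p.1.val + p.2.val : ℕ)) <| by
    refine (Fintype.bijective_iff_injective_and_card _).2 ⟨?_, by simp [ZMod.card]⟩
    rintro ⟨k, a⟩ ⟨k', a'⟩ h
    have h : q * k.val + a.val = q * k'.val + a'.val := by
      simpa only [val_natCast_cell] using congrArg ZMod.val h
    have ha : a.val = a'.val := by
      simpa [Nat.mul_add_mod, Nat.mod_eq_of_lt a.isLt, Nat.mod_eq_of_lt a'.isLt]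
        using congrArg (· % q) h
    have hk : k.val = k'.val := by
      simpa [Nat.mul_add_div a.pos, Nat.div_eq_of_lt a.isLt, Nat.div_eq_of_lt a'.isLt]
        using congrArg (· / q) h
    simp [ZMod.val_injective m hk, Fin.ext ha]

lemma cellOf_cellEquiv (p : ZMod m × Fin q) : cellOf m q (cellEquiv m q p) = p.1 :=
  cellOf_natCast m q p.1 p.2

lemma card_filter_cellOf_eq_le (k : ZMod m) : #(univ.filter fun c => cellOf m q c = k) ≤ q := by
  have hsub : univ.filter (fun c => cellOf m q c = k) ⊆
      univ.image fun a => cellEquiv m q (k, a) := by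
    intro c hc
    obtain ⟨⟨k', a⟩, rfl⟩ := (cellEquiv m q).surjective c
    rw [mem_filter, cellOf_cellEquiv] at hc
    obtain rfl : k' = k := hc.2
    exact mem_image.2 ⟨a, mem_univ _, rfl⟩
  exact (card_le_card hsub).trans (card_image_le.trans (by simp))

lemma sum_eq_sum_cellPoint (d : ℕ) {M : Type*} [AddCommMonoid M]
    (f : (Fin d → ZMod (m * q)) → M) :
    ∑ x, f x = ∑ k : Fin d → ZMod m, ∑ a : Fin d → Fin q, f (cellPoint d m q k a) := by
  let e := (Equiv.arrowProdEquivProdArrow (Fin d) (fun _ => ZMod m) (fun _ => Fin q)).symm.trans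
    (Equiv.piCongrRight fun _ => cellEquiv m q)
  rw [← e.sum_comp, Fintype.sum_prod_type]
  rfl

/-- `a - b - q (k_a - k_b)` is the difference of the offsets of `a` and `b` in their cells. -/
lemma abs_valMinAbs_sub_sub_cell_le (hm : 2 ≤ m) (a b : ZMod (m * q)) :
    |(a - b - ((q * (cellOf m q a - cellOf m q b).val : ℕ) : ZMod (m * q))).valMinAbs|
      ≤ q - 1 := by
  have hq : 0 < q := Nat.pos_of_mul_pos_left (NeZero.pos (m * q))
  set v := (cellOf m q a - cellOf m q b).val with hv
  obtain ⟨t, ht⟩ : (m : ℤ) ∣ (a.val / q : ℕ) - (b.val / q : ℕ) - v := by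
    rw [← ZMod.intCast_zmod_eq_zero_iff_dvd, Int.cast_sub, Int.cast_sub, Int.cast_natCast,
      Int.cast_natCast, Int.cast_natCast, hv, ZMod.natCast_zmod_val, cellOf, cellOf, sub_self]
  have hr : (q : ℤ) * (a.val / q : ℕ) + (a.val % q : ℕ) = a.val := by
    exact_mod_cast Nat.div_add_mod a.val q
  have hs : (q : ℤ) * (b.val / q : ℕ) + (b.val % q : ℕ) = b.val := by
    exact_mod_cast Nat.div_add_mod b.val q
  have hcast : a - b - ((q * v : ℕ) : ZMod (m * q)) =
      (((a.val % q : ℕ) - (b.val % q : ℕ) : ℤ) : ZMod (m * q)) := by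
    have : a - b - ((q * v : ℕ) : ZMod (m * q)) = (((a.val : ℤ) - b.val - (q * v : ℕ) : ℤ) :
        ZMod (m * q)) := by simp
    rw [this, ZMod.intCast_eq_intCast_iff_dvd_sub]
    exact ⟨-t, by rw [Nat.cast_mul, Nat.cast_mul]; linear_combination -(q : ℤ) * ht + hr - hs⟩
  have hrq : a.val % q < q := Nat.mod_lt a.val hq
  have hsq : b.val % q < q := Nat.mod_lt b.val hq
  have hmq : (2 * q : ℤ) ≤ (m * q : ℕ) := by exact_mod_cast Nat.mul_le_mul_right q hm
  have hj : |((a.val % q : ℕ) - (b.val % q : ℕ) : ℤ)| ≤ q - 1 := by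
    rw [abs_le]; constructor <;> omega
  rw [hcast, ZMod.valMinAbs_intCast_of_abs_mul_two_lt (by linarith)]
  exact hj

def cellDisplacement (d : ℕ) (k l : Fin d → ZMod m) : Fin d → ZMod (m * q) :=
  fun i => ((q * (k i - l i).val : ℕ) : ZMod (m * q))

lemma cellDisplacement_eq_zero_iff {d : ℕ} {k l : Fin d → ZMod m} :
    cellDisplacement m q d k l = 0 ↔ k = l := by
  have hq : 0 < q := Nat.pos_of_mul_pos_left (NeZero.pos (m * q))
  simp only [funext_iff, cellDisplacement, Pi.zero_apply, ZMod.natCast_eq_zero_iff]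
  refine forall_congr' fun i => ?_
  rw [mul_comm m q, Nat.mul_dvd_mul_iff_left hq, ← sub_eq_zero, ← ZMod.val_eq_zero]
  exact ⟨fun h => Nat.eq_zero_of_dvd_of_lt h (ZMod.val_lt _), fun h => h ▸ dvd_zero _⟩

lemma card_filter_cellOf_eq_cellOf_le {d : ℕ} (x : Fin d → ZMod (m * q)) :
    #(univ.filter fun y : Fin d → ZMod (m * q) =>
      (fun i => cellOf m q (x i)) = fun i => cellOf m q (y i)) ≤ q ^ d := by
  simp_rw [funext_iff, eq_comm (a := cellOf m q (x _))]
  calc _ = ∏ i, #(univ.filter fun c => cellOf m q c = cellOf m q (x i)) := by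
        convert card_filter_forall_eq_prod fun i c => cellOf m q c = cellOf m q (x i)
    _ ≤ ∏ _i : Fin d, q := prod_le_prod' fun i _ => card_filter_cellOf_eq_le m q _
    _ = q ^ d := by simp

end Cells

lemma abs_spin (b : Bool) : |spin b| = 1 := by cases b <;> simp [spin]

lemma ham_eq_sum_sum {d n : ℕ} [NeZero n] {J : (Fin d → ZMod n) → ℝ} (hJ : J 0 = 0)
    (h : ℝ) (σ : (Fin d → ZMod n) → Bool) :
    ham d n J h σ = -(1 / 2) * ∑ x, ∑ y, J (x - y) * (spin (σ x) * spin (σ y))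
      + h * ∑ x, spin (σ x) := by
  simp only [ham, filter_ne']
  congr 3 with x
  exact sum_erase _ (by simp [hJ])

lemma cast_blockF {d m q : ℕ} (σ : (Fin d → ZMod (m * q)) → Bool) (k : Fin d → ZMod m) :
    (blockF d m q σ k : ℝ) = ∑ a, spin (σ (cellPoint d m q k a)) := by
  rw [blockF, Int.cast_sum]
  exact sum_congr rfl fun a _ => by cases σ (cellPoint d m q k a) <;> simp [spin, spinZ]

section CoarseHamiltonian

variable (d m q : ℕ) (L : ℝ) (V : EuclideanSpace ℝ (Fin d) → ℝ)

noncomputable def cellKernel (x y : Fin d → ZMod (m * q)) : ℝ :=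
  Jpot d (m * q) L V
    (cellDisplacement m q d (fun i => cellOf m q (x i)) (fun i => cellOf m q (y i)))

/-- A stand-in for `H̄⁰`: the Hamiltonian of the block-constant coupling `cellKernel`, which
depends on `σ` only through `η = F(σ)`. -/
noncomputable def coarseHam [NeZero m] (h : ℝ) (η : (Fin d → ZMod m) → ℤ) : ℝ :=
  -(1 / 2) * ∑ k, ∑ l, Jpot d (m * q) L V (cellDisplacement m q d k l) * (η k * η l)
    + h * ∑ k, (η k : ℝ)

lemma cellKernel_cellPoint [NeZero m] (k l : Fin d → ZMod m) (a b : Fin d → Fin q) :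
    cellKernel d m q L V (cellPoint d m q k a) (cellPoint d m q l b) =
      Jpot d (m * q) L V (cellDisplacement m q d k l) := by
  simp only [cellKernel, cellOf_cellPoint]

lemma coarseHam_blockF [NeZero m] [NeZero (m * q)] (h : ℝ)
    (σ : (Fin d → ZMod (m * q)) → Bool) :
    coarseHam d m q L V h (blockF d m q σ) =
      -(1 / 2) * ∑ x, ∑ y, cellKernel d m q L V x y * (spin (σ x) * spin (σ y))
        + h * ∑ x, spin (σ x) := by
  simp only [coarseHam, cast_blockF]
  congr 2
  · rw [sum_eq_sum_cellPoint m q d]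
    refine sum_congr rfl fun k _ => ?_
    simp_rw [sum_eq_sum_cellPoint m q d, cellKernel_cellPoint, sum_mul_sum, mul_sum]
    rw [sum_comm]
  · exact (sum_eq_sum_cellPoint m q d fun x => spin (σ x)).symm

end CoarseHamiltonian

section RowSum

variable {d m q : ℕ} [NeZero m] [NeZero (m * q)] {L : ℝ}
  {V : EuclideanSpace ℝ (Fin d) → ℝ} {GV : ℝ}

lemma abs_Jpot_sub_cellKernel_le (hV : Differentiable ℝ V)
    (hGV : ∀ u, ‖gradient V u‖ ≤ GV) (hsupp : ∀ u, 1 < ‖u‖ → V u = 0) (hd : 1 ≤ d)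
    (hm : 2 ≤ m) (hqL : (q : ℝ) ≤ L) (hLn : 4 * L ≤ m * q) (x y : Fin d → ZMod (m * q)) :
    |Jpot d (m * q) L V (x - y) - cellKernel d m q L V x y| ≤
      (if (fun i => cellOf m q (x i)) = (fun i => cellOf m q (y i)) then 3 * GV / L ^ d else 0)
      + (if ∀ i, |((x i - y i).valMinAbs : ℝ)| ≤ L + (q - 1)
          then GV * (√d * ((q - 1) / L)) / L ^ d else 0) := by
  have hq : (1 : ℝ) ≤ q := by
    exact_mod_cast Nat.pos_of_mul_pos_left (NeZero.pos (m * q))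
  have hL : 0 < L := by linarith
  have hGV0 := (norm_nonneg _).trans (hGV 0)
  set k := fun i => cellOf m q (x i)
  set l := fun i => cellOf m q (y i)
  have hclose : ∀ i, |((x i - y i - cellDisplacement m q d k l i).valMinAbs : ℝ)| ≤ q - 1 :=
    fun i => by exact_mod_cast abs_valMinAbs_sub_sub_cell_le m q hm (x i) (y i)
  have hB2 : 0 ≤ GV * (√d * ((q - 1) / L)) / L ^ d := by
    have : 0 ≤ (q : ℝ) - 1 := by linarith
    positivity
  by_cases hkl : k = l
  · rw [cellKernel, (cellDisplacement_eq_zero_iff m q).2 hkl, if_pos hkl, Jpot_zero, sub_zero]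
    exact le_add_of_le_of_nonneg (abs_Jpot_le hV hGV hsupp hd hL _) (by split_ifs <;> simp [hB2])
  rw [if_neg hkl, zero_add]
  split_ifs with hbox
  · refine abs_Jpot_sub_Jpot_le hV hGV hsupp hL (by linarith) ?_ ?_ ?_ hclose
    · push_cast; linarith
    · rintro hxy
      exact hkl (by simp [k, l, sub_eq_zero.1 hxy])
    · exact fun h0 => hkl ((cellDisplacement_eq_zero_iff m q).1 h0)
  · push Not at hbox
    obtain ⟨i, hi⟩ := hbox
    set w := cellDisplacement m q d k l
    have htri := ZMod.abs_valMinAbs_le_add (w i) (x i - y i - w i)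
    rw [add_sub_cancel] at htri
    have htri : |((x i - y i).valMinAbs : ℝ)| ≤ |((w i).valMinAbs : ℝ)|
        + |((x i - y i - w i).valMinAbs : ℝ)| := by exact_mod_cast htri
    have := hclose i
    rw [cellKernel, Jpot_eq_zero_of_lt_abs hL hsupp (z := x - y) i
      (by simp only [Pi.sub_apply]; linarith),
      Jpot_eq_zero_of_lt_abs hL hsupp i (by linarith), sub_zero, abs_zero]

lemma sum_abs_Jpot_sub_cellKernel_le (hV : Differentiable ℝ V)
    (hGV : ∀ u, ‖gradient V u‖ ≤ GV) (hsupp : ∀ u, 1 < ‖u‖ → V u = 0) (hd : 1 ≤ d)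
    (hm : 2 ≤ m) (hqL : (q : ℝ) ≤ L) (hLn : 4 * L ≤ m * q) (x : Fin d → ZMod (m * q)) :
    ∑ y, |Jpot d (m * q) L V (x - y) - cellKernel d m q L V x y|
      ≤ (3 + 4 ^ d * √d) * (q / L) * GV := by
  have hq : (1 : ℝ) ≤ q := by
    exact_mod_cast Nat.pos_of_mul_pos_left (NeZero.pos (m * q))
  have hL : 0 < L := by linarith
  have hGV0 := (norm_nonneg _).trans (hGV 0)
  have hT : 0 ≤ L + (q - 1) := by linarith
  calc ∑ y, |Jpot d (m * q) L V (x - y) - cellKernel d m q L V x y|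
      ≤ #(univ.filter fun y : Fin d → ZMod (m * q) =>
            (fun i => cellOf m q (x i)) = fun i => cellOf m q (y i)) * (3 * GV / L ^ d)
        + #(univ.filter fun y : Fin d → ZMod (m * q) =>
            ∀ i, |((x i - y i).valMinAbs : ℝ)| ≤ L + (q - 1)) *
          (GV * (√d * ((q - 1) / L)) / L ^ d) := by
        refine (sum_le_sum fun y _ =>
          abs_Jpot_sub_cellKernel_le hV hGV hsupp hd hm hqL hLn x y).trans_eq ?_
        rw [sum_add_distrib, ← sum_filter, ← sum_filter, sum_const, sum_const, nsmul_eq_mul,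
          nsmul_eq_mul]
    _ ≤ q ^ d * (3 * GV / L ^ d) + (4 * L) ^ d * (GV * (√d * ((q - 1) / L)) / L ^ d) := by
        gcongr
        · exact_mod_cast card_filter_cellOf_eq_cellOf_le m q x
        · exact (card_filter_forall_abs_valMinAbs_sub_le x hT).trans (by gcongr; linarith)
    _ = 3 * (q / L) ^ d * GV + 4 ^ d * √d * ((q - 1) / L) * GV := by
        rw [mul_pow, div_pow]
        field_simp
    _ ≤ (3 + 4 ^ d * √d) * (q / L) * GV := by
        have hqL' : (q : ℝ) / L ≤ 1 := (div_le_one hL).2 hqL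
        have : ((q : ℝ) / L) ^ d ≤ q / L := pow_le_of_le_one (by positivity) hqL' (by omega)
        have : ((q : ℝ) - 1) / L ≤ q / L := by gcongr; linarith
        rw [add_mul, add_mul]
        gcongr

end RowSum

lemma abs_ham_sub_coarseHam_le {d m q : ℕ} [NeZero m] [NeZero (m * q)] {L : ℝ}
    {V : EuclideanSpace ℝ (Fin d) → ℝ} {R : ℝ}
    (hR : ∀ x, ∑ y, |Jpot d (m * q) L V (x - y) - cellKernel d m q L V x y| ≤ R) (h : ℝ)
    (σ : (Fin d → ZMod (m * q)) → Bool) :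
    |ham d (m * q) (Jpot d (m * q) L V) h σ - coarseHam d m q L V h (blockF d m q σ)|
      ≤ ((m : ℝ) * q) ^ d * R / 2 := by
  have hdiff : ham d (m * q) (Jpot d (m * q) L V) h σ - coarseHam d m q L V h (blockF d m q σ)
      = -(1 / 2) * ∑ x, ∑ y, (Jpot d (m * q) L V (x - y) - cellKernel d m q L V x y) *
          (spin (σ x) * spin (σ y)) := by
    rw [ham_eq_sum_sum Jpot_zero, coarseHam_blockF]
    simp only [sub_mul, sum_sub_distrib]
    ring
  have hcard : (Fintype.card (Fin d → ZMod (m * q)) : ℝ) = ((m : ℝ) * q) ^ d := by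
    simp [ZMod.card]
  have := abs_sum_sum_mul_le _ hR (fun x => spin (σ x)) fun x => (abs_spin _).le
  rw [hcard] at this
  rw [hdiff, abs_mul, abs_neg, abs_of_pos one_half_pos]
  linarith

/-- **A priori error of the first coarse-grained Hamiltonian:** there is a constant `C`
depending only on the dimension `d` such that for every spin configuration `σ`,
`(1/N) |H_N(σ) − H̄⁰(F(σ))| ≤ C (q/L) ‖∇V‖_∞`, where `H̄⁰(η) = E[H_N | F = η]`. -/
theorem first_coarse_hamiltonian_error
    (d : ℕ) (hd : 1 ≤ d) :
    ∃ C : ℝ, ∀ (m q : ℕ) [NeZero m] [NeZero (m * q)], 1 ≤ m → 2 ≤ q →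
      ∀ V : EuclideanSpace ℝ (Fin d) → ℝ, ContDiff ℝ 1 V →
        (∀ z, V (-z) = V z) →
        (∀ z, 1 < ‖z‖ → V z = 0) →
        ∀ GV : ℝ, (∀ z, ‖gradient V z‖ ≤ GV) →
          ∀ L : ℝ, (q : ℝ) ≤ L → L ≤ ((m : ℝ) * (q : ℝ)) / 4 →
            ∀ h : ℝ, ∀ σ : (Fin d → ZMod (m * q)) → Bool,
              (1 / ((m : ℝ) * (q : ℝ)) ^ d) *
                  |ham d (m * q) (Jpot d (m * q) L V) h σ -
                    (∑ σ' ∈ fiber d m q (blockF d m q σ),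
                        ham d (m * q) (Jpot d (m * q) L V) h σ') /
                      ((fiber d m q (blockF d m q σ)).card : ℝ)|
                ≤ C * ((q : ℝ) / L) * GV := by
  refine ⟨3 + 4 ^ d * √d, fun m q _ _ _ hq V hV _ hsupp GV hGV L hqL hLm h σ => ?_⟩
  have hLn : 4 * L ≤ m * q := by linarith
  have hm : 2 ≤ m := by
    have : 4 * q ≤ m * q := by exact_mod_cast (by linarith : (4 : ℝ) * q ≤ m * q)
    have := Nat.le_of_mul_le_mul_right this (by omega)
    omega
  have hcoarse := abs_ham_sub_coarseHam_le (sum_abs_Jpot_sub_cellKernel_le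
    (hV.differentiable one_ne_zero) hGV hsupp hd hm hqL hLn) h
  have hN : (0 : ℝ) < ((m : ℝ) * q) ^ d := by positivity
  rw [one_div_mul_eq_div, div_le_iff₀ hN, mul_comm _ (((m : ℝ) * q) ^ d)]
  refine abs_sub_sum_div_card_le (by simp [fiber]) fun σ' hσ' => ?_
  rw [fiber, mem_filter] at hσ'
  have h1 := hcoarse σ
  have h2 := hcoarse σ'
  rw [hσ'.2, abs_sub_comm] at h2
  calc _ ≤ _ := abs_sub_le _ (coarseHam d m q L V h (blockF d m q σ)) _
    _ ≤ _ := by linarith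
end

section
/- Assume Q ≥ 2, let k ≠ l be two distinct cells, let η be a coarse configuration with P̄(η) > 0, and set α_k = (η(k)+Q)/2, α_l = (η(l)+Q)/2. Let a(x,y) = J(x−y) − J̄(k,l) for x ∈ C_k, y ∈ C_l, where J̄(k,l) = Q^{−2} Σ_{x∈C_k, y∈C_l} J(x−y) (so Σ_{x,y} a(x,y) = 0), and define j¹ = Σ_{x∈C_k, y∈C_l} a(x,y)², jᵏ = Σ_{x∈C_k} Σ_{y,y'∈C_l} a(x,y)a(x,y'), jˡ = Σ_{y∈C_l} Σ_{x,x'∈C_k} a(x,y)a(x',y). Then the conditional second moment of the fluctuation S(σ) = Σ_{x∈C_k, y∈C_l} a(x,y) σ(x)σ(y) is E[S² | F = η] = jᵏ·E₂(α_l)(1 − E₂(α_k)) + jˡ·E₂(α_k)(1 − E₂(α_l)) + j¹·(1 − E₂(α_k))(1 − E₂(α_l)). -/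
open Finset

/-!
Conditioned on `F = η`, the uniform measure on the fiber is the product over the cells `i` of
the uniform measures on the spin configurations of a cell with magnetization `η i`; in particular
the spins of the two cells `k ≠ l` are independent. Expanding `S²` therefore gives a quadruple sum
of `a(x,y) a(x',y')` weighted by within-cell pair correlations. By exchangeability two distinct
spins of a cell with `Q` sites and magnetization `t` have a common correlation `c`, and averaging
`(Σ σ)² = t²` gives `Q + Q(Q-1)c = t²`, i.e. `c = E₂(α)`. Since `Σ a = 0`, the quadruple sum
collapses to the terms `jᵏ`, `jˡ`, `j¹`.
-/

open scoped BigOperators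

theorem spin_mul_self (b : Bool) : spin b * spin b = 1 := by
  cases b <;> simp [spin]

theorem Equiv.Perm.exists_apply_eq_and_apply_eq {ι : Type*} [DecidableEq ι] {a a' b b' : ι}
    (ha : a ≠ a') (hb : b ≠ b') : ∃ π : Equiv.Perm ι, π b = a ∧ π b' = a' := by
  set c := Equiv.swap b a b'
  have hc : c ≠ a := fun h =>
    hb ((Equiv.swap b a).injective (h.trans (Equiv.swap_apply_left b a).symm)).symm
  refine ⟨(Equiv.swap b a).trans (Equiv.swap c a'), ?_, ?_⟩
  · simp only [Equiv.trans_apply, Equiv.swap_apply_left]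
    exact Equiv.swap_apply_of_ne_of_ne hc.symm ha
  · exact Equiv.swap_apply_left c a'

def magnetizationClass (ι : Type*) [Fintype ι] [DecidableEq ι] (t : ℤ) : Finset (ι → Bool) :=
  Finset.univ.filter fun f => ∑ a, spinZ (f a) = t

section MagnetizationClass

variable {ι : Type*} [Fintype ι] [DecidableEq ι]

theorem sum_spin_of_mem_magnetizationClass {t : ℤ} {f : ι → Bool}
    (hf : f ∈ magnetizationClass ι t) : ∑ a, spin (f a) = t := by
  have ht : ∑ a, spinZ (f a) = t := (Finset.mem_filter.mp hf).2
  rw [← ht, Int.cast_sum]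
  exact Fintype.sum_congr _ _ fun a => by cases f a <;> simp [spin, spinZ]

theorem comp_perm_mem_magnetizationClass_iff {t : ℤ} (π : Equiv.Perm ι) (f : ι → Bool) :
    f ∘ π ∈ magnetizationClass ι t ↔ f ∈ magnetizationClass ι t := by
  simp only [magnetizationClass, Finset.mem_filter, Finset.mem_univ, true_and, Function.comp_apply,
    Equiv.sum_comp π fun a => spinZ (f a)]

theorem expect_magnetizationClass_spin_mul_spin_congr (t : ℤ) {a a' b b' : ι} (ha : a ≠ a')
    (hb : b ≠ b') :
    𝔼 f ∈ magnetizationClass ι t, spin (f a) * spin (f a')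
      = 𝔼 f ∈ magnetizationClass ι t, spin (f b) * spin (f b') := by
  obtain ⟨π, hπb, hπb'⟩ := Equiv.Perm.exists_apply_eq_and_apply_eq ha hb
  refine Finset.expect_equiv (π.symm.arrowCongr (Equiv.refl Bool))
    (fun f => (comp_perm_mem_magnetizationClass_iff π f).symm) fun f _ => ?_
  simp [Equiv.arrowCongr_apply, hπb, hπb']

theorem sum_sum_ite_diag (b c : ℝ) :
    ∑ x : ι, ∑ y : ι, (if x = y then b else c)
      = Fintype.card ι * b + Fintype.card ι * (Fintype.card ι - 1) * c := by
  have h : ∀ x y : ι, (if x = y then b else c) = c + (if x = y then b - c else 0) := by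
    intro x y; split_ifs <;> ring
  simp only [h, Finset.sum_add_distrib, Finset.sum_ite_eq, Finset.mem_univ, if_true,
    Finset.sum_const, Finset.card_univ, nsmul_eq_mul]
  ring

theorem expect_magnetizationClass_spin_mul_spin (hQ : 2 ≤ Fintype.card ι) {t : ℤ}
    (hne : (magnetizationClass ι t).Nonempty) (a a' : ι) :
    𝔼 f ∈ magnetizationClass ι t, spin (f a) * spin (f a')
      = if a = a' then 1 else
          ((t : ℝ) ^ 2 - Fintype.card ι) / (Fintype.card ι * (Fintype.card ι - 1)) := by
  have hdiag : ∀ x, 𝔼 f ∈ magnetizationClass ι t, spin (f x) * spin (f x) = 1 := fun x => by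
    simp only [spin_mul_self, Finset.expect_const hne]
  split_ifs with h
  · rw [h, hdiag]
  set c := 𝔼 f ∈ magnetizationClass ι t, spin (f a) * spin (f a')
  have hcorr : ∀ x y,
      𝔼 f ∈ magnetizationClass ι t, spin (f x) * spin (f y) = if x = y then 1 else c := by
    intro x y
    split_ifs with hxy
    · rw [hxy, hdiag]
    · exact expect_magnetizationClass_spin_mul_spin_congr t hxy h
  have hmoment : (t : ℝ) ^ 2
      = Fintype.card ι + Fintype.card ι * ((Fintype.card ι : ℝ) - 1) * c := calc
    (t : ℝ) ^ 2 = 𝔼 f ∈ magnetizationClass ι t, (∑ x, spin (f x)) ^ 2 := by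
      rw [Finset.expect_congr rfl fun f hf => by rw [sum_spin_of_mem_magnetizationClass hf],
        Finset.expect_const hne]
    _ = ∑ x, ∑ y, 𝔼 f ∈ magnetizationClass ι t, spin (f x) * spin (f y) := by
      simp only [sq, Finset.sum_mul_sum, Finset.expect_sum_comm]
    _ = _ := by simp only [hcorr, sum_sum_ite_diag, mul_one]
  have hQ1 : (1 : ℝ) < Fintype.card ι := by exact_mod_cast hQ
  rw [eq_div_iff (by nlinarith)]
  linear_combination -hmoment

end MagnetizationClass

section ProductEnsemble

variable {κ β : Type*} [Fintype κ] [DecidableEq κ]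

theorem prod_univ_expect {K : Type*} [Field K] [CharZero K] (s : κ → Finset β) (f : κ → β → K) :
    ∏ i, 𝔼 x ∈ s i, f i x = 𝔼 τ ∈ Fintype.piFinset s, ∏ i, f i (τ i) := by
  simp only [Finset.expect_eq_sum_div_card, Finset.prod_div_distrib, Finset.prod_univ_sum,
    Fintype.card_piFinset, Nat.cast_prod]

theorem expect_piFinset_mul_apply {K : Type*} [Field K] [CharZero K] (s : κ → Finset β)
    (hs : ∀ i, (s i).Nonempty) {k l : κ} (hkl : k ≠ l) (u v : β → K) :
    𝔼 τ ∈ Fintype.piFinset s, u (τ k) * v (τ l) = (𝔼 x ∈ s k, u x) * 𝔼 y ∈ s l, v y := by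
  let f : κ → β → K := Function.update (Function.update 1 k u) l v
  have hf : ∀ i, i ≠ k ∧ i ≠ l → f i = 1 := fun i hi => by
    simp [f, hi.1, hi.2]
  have hfk : f k = u := by simp [f, hkl]
  have hfl : f l = v := by simp [f]
  calc 𝔼 τ ∈ Fintype.piFinset s, u (τ k) * v (τ l)
      = 𝔼 τ ∈ Fintype.piFinset s, ∏ i, f i (τ i) := by
        refine Finset.expect_congr rfl fun τ _ => ?_
        rw [Finset.prod_eq_mul k l hkl (fun i _ hi => by simp [hf i hi]) (by simp) (by simp),
          hfk, hfl]
    _ = ∏ i, 𝔼 x ∈ s i, f i x := (prod_univ_expect s f).symm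
    _ = (𝔼 x ∈ s k, u x) * 𝔼 y ∈ s l, v y := by
        rw [Finset.prod_eq_mul k l hkl (fun i _ hi => by simp [hf i hi, hs i]) (by simp)
          (by simp), hfk, hfl]

theorem expect_piFinset_sq_bilinear {α α' : Type*} [Fintype α] [Fintype α']
    (s : κ → Finset β) (hs : ∀ i, (s i).Nonempty) {k l : κ} (hkl : k ≠ l)
    (A : α → α' → ℝ) (x : α → β → ℝ) (y : α' → β → ℝ) :
    𝔼 τ ∈ Fintype.piFinset s, (∑ a, ∑ b, A a b * (x a (τ k) * y b (τ l))) ^ 2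
      = ∑ a, ∑ a', ∑ b, ∑ b', A a b * A a' b'
          * ((𝔼 f ∈ s k, x a f * x a' f) * 𝔼 g ∈ s l, y b g * y b' g) := by
  have hsq : ∀ τ : κ → β, (∑ a, ∑ b, A a b * (x a (τ k) * y b (τ l))) ^ 2
      = ∑ a, ∑ a', ∑ b, ∑ b', A a b * A a' b'
          * ((x a (τ k) * x a' (τ k)) * (y b (τ l) * y b' (τ l))) := fun τ => by
    simp only [sq, Finset.sum_mul_sum]
    exact Finset.sum_congr rfl fun a _ => Finset.sum_congr rfl fun a' _ =>
      Finset.sum_congr rfl fun b _ => Finset.sum_congr rfl fun b' _ => by ring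
  have hfactor : ∀ a a' b b', 𝔼 τ ∈ Fintype.piFinset s,
      (x a (τ k) * x a' (τ k)) * (y b (τ l) * y b' (τ l))
        = (𝔼 f ∈ s k, x a f * x a' f) * 𝔼 g ∈ s l, y b g * y b' g := fun a a' b b' =>
    expect_piFinset_mul_apply s hs hkl (fun f => x a f * x a' f) (fun g => y b g * y b' g)
  simp only [hsq, Finset.expect_sum_comm, ← Finset.mul_expect, hfactor]

end ProductEnsemble

theorem sum_mul_mul_ite_ite_of_sum_eq_zero {α α' : Type*} [Fintype α] [Fintype α'] [DecidableEq α]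
    [DecidableEq α'] (A : α → α' → ℝ) (hA : ∑ a, ∑ b, A a b = 0) (x y : ℝ) :
    ∑ a, ∑ a', ∑ b, ∑ b', A a b * A a' b'
        * ((if a = a' then 1 else x) * (if b = b' then 1 else y))
      = (∑ a, ∑ b, ∑ b', A a b * A a b') * y * (1 - x)
        + (∑ b, ∑ a, ∑ a', A a b * A a' b) * x * (1 - y)
        + (∑ a, ∑ b, A a b ^ 2) * (1 - x) * (1 - y) := by
  have hsplit : ∀ (a a' : α) (b b' : α'),
      A a b * A a' b' * ((if a = a' then 1 else x) * (if b = b' then 1 else y))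
        = x * y * (A a b * A a' b')
          + y * (1 - x) * (if a = a' then A a b * A a' b' else 0)
          + x * (1 - y) * (if b = b' then A a b * A a' b' else 0)
          + (1 - x) * (1 - y) * (if a = a' then if b = b' then A a b * A a' b' else 0 else 0) := by
    intro a a' b b'
    split_ifs <;> ring
  have hexpand : ∑ a, ∑ a', ∑ b, ∑ b', A a b * A a' b'
        * ((if a = a' then 1 else x) * (if b = b' then 1 else y))
      = x * y * ∑ a, ∑ a', ∑ b, ∑ b', A a b * A a' b'
        + y * (1 - x) * ∑ a, ∑ a', ∑ b, ∑ b', (if a = a' then A a b * A a' b' else 0)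
        + x * (1 - y) * ∑ a, ∑ a', ∑ b, ∑ b', (if b = b' then A a b * A a' b' else 0)
        + (1 - x) * (1 - y) * ∑ a, ∑ a', ∑ b, ∑ b',
            (if a = a' then if b = b' then A a b * A a' b' else 0 else 0) := by
    simp only [hsplit, Finset.sum_add_distrib, Finset.mul_sum]
  have h₀ : ∑ a, ∑ a', ∑ b, ∑ b', A a b * A a' b' = 0 := by
    simp only [← Finset.mul_sum, ← Finset.sum_mul, hA, mul_zero, Finset.sum_const_zero]
  have hk : ∑ a, ∑ a', ∑ b, ∑ b', (if a = a' then A a b * A a' b' else 0)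
      = ∑ a, ∑ b, ∑ b', A a b * A a b' := by
    simp only [Finset.sum_ite_irrel, Finset.sum_const_zero, Finset.sum_ite_eq, Finset.mem_univ,
      if_true]
  have hl : ∑ a, ∑ a', ∑ b, ∑ b', (if b = b' then A a b * A a' b' else 0)
      = ∑ b, ∑ a, ∑ a', A a b * A a' b := by
    simp only [Finset.sum_ite_eq, Finset.mem_univ, if_true]
    exact (Finset.sum_congr rfl fun a _ => Finset.sum_comm).trans Finset.sum_comm
  have h₁ : ∑ a, ∑ a', ∑ b, ∑ b',
      (if a = a' then if b = b' then A a b * A a' b' else 0 else 0) = ∑ a, ∑ b, A a b ^ 2 := by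
    simp only [Finset.sum_ite_irrel, Finset.sum_const_zero, Finset.sum_ite_eq, Finset.mem_univ,
      if_true, sq]
  rw [hexpand, h₀, hk, hl, h₁]
  ring

theorem sum_sum_sub_mean {α α' : Type*} [Fintype α] [Fintype α'] (f : α → α' → ℝ) :
    ∑ a, ∑ b, (f a b - (∑ a', ∑ b', f a' b') / (Fintype.card α * Fintype.card α')) = 0 := by
  rcases isEmpty_or_nonempty α with hα | hα
  · simp
  rcases isEmpty_or_nonempty α' with hα' | hα'
  · simp
  simp only [Finset.sum_sub_distrib, Finset.sum_const, Finset.card_univ, nsmul_eq_mul]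
  field_simp
  ring

section CellCoordinates

variable (d m q : ℕ) [NeZero m] [NeZero (m * q)]

def cellCoordEquiv (hq : 0 < q) : ZMod m × Fin q ≃ ZMod (m * q) where
  toFun p := ((q * p.1.val + p.2.val : ℕ) : ZMod (m * q))
  invFun z := (((z.val / q : ℕ) : ZMod m), ⟨z.val % q, Nat.mod_lt _ hq⟩)
  left_inv := by
    rintro ⟨k, a⟩
    have hlt : q * k.val + a.val < m * q := by
      nlinarith [ZMod.val_lt k, a.isLt]
    simp only [ZMod.val_cast_of_lt hlt, Nat.mul_add_div hq, Nat.div_eq_of_lt a.isLt,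
      Nat.mul_add_mod, Nat.mod_eq_of_lt a.isLt, add_zero, ZMod.natCast_val, ZMod.cast_id]
  right_inv z := by
    have hlt : z.val / q < m := (Nat.div_lt_iff_lt_mul hq).2 (ZMod.val_lt z)
    simp only [ZMod.val_cast_of_lt hlt, Nat.div_add_mod, ZMod.natCast_val, ZMod.cast_id]

def siteEquiv (hq : 0 < q) : (Fin d → ZMod m) × (Fin d → Fin q) ≃ (Fin d → ZMod (m * q)) :=
  (Equiv.arrowProdEquivProdArrow _ _ _).symm.trans
    (Equiv.piCongrRight fun _ => cellCoordEquiv m q hq)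

def cellConfigEquiv (hq : 0 < q) :
    ((Fin d → ZMod (m * q)) → Bool) ≃ ((Fin d → ZMod m) → (Fin d → Fin q) → Bool) :=
  ((siteEquiv d m q hq).arrowCongr (Equiv.refl Bool)).symm.trans (Equiv.curry _ _ _)

theorem cellConfigEquiv_apply (hq : 0 < q) (σ : (Fin d → ZMod (m * q)) → Bool) :
    cellConfigEquiv d m q hq σ = fun k a => σ (cellPoint d m q k a) := rfl

theorem mem_fiber_iff (hq : 0 < q) (η : (Fin d → ZMod m) → ℤ)
    (σ : (Fin d → ZMod (m * q)) → Bool) :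
    σ ∈ fiber d m q η ↔ cellConfigEquiv d m q hq σ ∈
      Fintype.piFinset fun k => magnetizationClass (Fin d → Fin q) (η k) := by
  simp only [fiber, magnetizationClass, Finset.mem_filter, Finset.mem_univ, true_and,
    Fintype.mem_piFinset, funext_iff, blockF, cellConfigEquiv_apply]

theorem expect_fiber (hq : 0 < q) (η : (Fin d → ZMod m) → ℤ)
    (g : ((Fin d → ZMod m) → (Fin d → Fin q) → Bool) → ℝ) :
    𝔼 σ ∈ fiber d m q η, g (fun k a => σ (cellPoint d m q k a))
      = 𝔼 τ ∈ Fintype.piFinset (fun k => magnetizationClass (Fin d → Fin q) (η k)), g τ :=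
  Finset.expect_equiv (cellConfigEquiv d m q hq) (mem_fiber_iff d m q hq η) fun _ _ => rfl

end CellCoordinates

theorem fluctuation_second_moment_general
    (d m q : ℕ) [NeZero m] [NeZero (m * q)]
    (hQ : 2 ≤ q ^ d)
    (J : (Fin d → ZMod (m * q)) → ℝ)
    (k l : Fin d → ZMod m) (hkl : k ≠ l)
    (η : (Fin d → ZMod m) → ℤ) (hη : (fiber d m q η).Nonempty)
    (αk αl : ℕ)
    (hαk : η k + (q ^ d : ℤ) = 2 * (αk : ℤ)) (hαl : η l + (q ^ d : ℤ) = 2 * (αl : ℤ))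
    (E₂ : ℕ → ℝ)
    (hE₂ : ∀ a : ℕ, E₂ a =
      ((a : ℝ) * ((a : ℝ) - 1) - 2 * (a : ℝ) * ((q : ℝ) ^ d - (a : ℝ))
          + ((q : ℝ) ^ d - (a : ℝ)) * (((q : ℝ) ^ d - (a : ℝ)) - 1))
        / ((q : ℝ) ^ d * ((q : ℝ) ^ d - 1)))
    (aJ : (Fin d → Fin q) → (Fin d → Fin q) → ℝ)
    (haJ : ∀ a b, aJ a b =
      J (cellPoint d m q k a - cellPoint d m q l b)
        - (∑ a' : Fin d → Fin q, ∑ b' : Fin d → Fin q,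
            J (cellPoint d m q k a' - cellPoint d m q l b')) / ((q : ℝ) ^ d) ^ 2)
    (j₁ jk jl : ℝ)
    (hj₁ : j₁ = ∑ a : Fin d → Fin q, ∑ b : Fin d → Fin q, (aJ a b) ^ 2)
    (hjk : jk = ∑ a : Fin d → Fin q, ∑ b : Fin d → Fin q, ∑ b' : Fin d → Fin q,
        aJ a b * aJ a b')
    (hjl : jl = ∑ b : Fin d → Fin q, ∑ a : Fin d → Fin q, ∑ a' : Fin d → Fin q,
        aJ a b * aJ a' b)
    (S : ((Fin d → ZMod (m * q)) → Bool) → ℝ)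
    (hS : ∀ σ, S σ = ∑ a : Fin d → Fin q, ∑ b : Fin d → Fin q,
        aJ a b * (spin (σ (cellPoint d m q k a)) * spin (σ (cellPoint d m q l b)))) :
    (∑ σ ∈ fiber d m q η, (S σ) ^ 2) / ((fiber d m q η).card : ℝ)
      = jk * E₂ αl * (1 - E₂ αk) + jl * E₂ αk * (1 - E₂ αl)
        + j₁ * (1 - E₂ αk) * (1 - E₂ αl) := by
  have hq : 0 < q := Nat.pos_of_ne_zero (by rintro rfl; rcases d with _ | d <;> simp at hQ)
  set s := fun i => magnetizationClass (Fin d → Fin q) (η i)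
  have hs : ∀ i, (s i).Nonempty := by
    obtain ⟨σ, hσ⟩ := hη
    exact Fintype.piFinset_nonempty.mp ⟨_, (mem_fiber_iff d m q hq η σ).mp hσ⟩
  have hcard : (Fintype.card (Fin d → Fin q) : ℝ) = (q : ℝ) ^ d := by simp
  have hA : ∑ a, ∑ b, aJ a b = 0 := by
    simpa only [haJ, hcard, sq] using
      sum_sum_sub_mean fun a b => J (cellPoint d m q k a - cellPoint d m q l b)
  have hcorr : ∀ i (α : ℕ), η i + (q ^ d : ℤ) = 2 * (α : ℤ) → ∀ a a',
      𝔼 f ∈ s i, spin (f a) * spin (f a') = if a = a' then 1 else E₂ α := by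
    intro i α hα a a'
    have hηα : (η i : ℝ) = 2 * α - (q : ℝ) ^ d := by
      rw [eq_sub_iff_add_eq]; exact_mod_cast hα
    have hE₂α : E₂ α = ((η i : ℝ) ^ 2 - (q : ℝ) ^ d) / ((q : ℝ) ^ d * ((q : ℝ) ^ d - 1)) := by
      rw [hE₂, hηα]; ring
    rw [expect_magnetizationClass_spin_mul_spin (by simpa using hQ) (hs i), hcard, hE₂α]
  rw [← Finset.expect_eq_sum_div_card, Finset.expect_congr rfl fun σ _ => by rw [hS σ],
    expect_fiber d m q hq η fun τ => (∑ a, ∑ b, aJ a b * (spin (τ k a) * spin (τ l b))) ^ 2,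
    expect_piFinset_sq_bilinear s hs hkl aJ (fun a f => spin (f a)) (fun b g => spin (g b))]
  simp only [hcorr k αk hαk, hcorr l αl hαl]
  rw [sum_mul_mul_ite_ite_of_sum_eq_zero aJ hA, hj₁, hjk, hjl]

/-- **Conditional second moment of the two-cell fluctuation:** with
`S(σ) = Σ_{x∈C_k, y∈C_l} a(x,y) σ(x)σ(y)` and `a(x,y) = J(x−y) − J̄(k,l)`,
`E[S² | F = η] = jᵏ·E₂(α_l)(1 − E₂(α_k)) + jˡ·E₂(α_k)(1 − E₂(α_l))
               + j¹·(1 − E₂(α_k))(1 − E₂(α_l))`. -/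
theorem fluctuation_second_moment
    (d m q : ℕ) [NeZero m] [NeZero (m * q)] (hd : 1 ≤ d) (hm : 1 ≤ m)
    (hQ : 2 ≤ q ^ d)
    (J : (Fin d → ZMod (m * q)) → ℝ) (hJeven : ∀ x, J (-x) = J x) (hJ0 : J 0 = 0)
    (k l : Fin d → ZMod m) (hkl : k ≠ l)
    (η : (Fin d → ZMod m) → ℤ) (hη : (fiber d m q η).Nonempty)
    (αk αl : ℕ)
    (hαk : η k + (q ^ d : ℤ) = 2 * (αk : ℤ)) (hαl : η l + (q ^ d : ℤ) = 2 * (αl : ℤ))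
    (E₂ : ℕ → ℝ)
    (hE₂ : ∀ a : ℕ, E₂ a =
      ((a : ℝ) * ((a : ℝ) - 1) - 2 * (a : ℝ) * ((q : ℝ) ^ d - (a : ℝ))
          + ((q : ℝ) ^ d - (a : ℝ)) * (((q : ℝ) ^ d - (a : ℝ)) - 1))
        / ((q : ℝ) ^ d * ((q : ℝ) ^ d - 1)))
    (aJ : (Fin d → Fin q) → (Fin d → Fin q) → ℝ)
    (haJ : ∀ a b, aJ a b =
      J (cellPoint d m q k a - cellPoint d m q l b)
        - (∑ a' : Fin d → Fin q, ∑ b' : Fin d → Fin q,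
            J (cellPoint d m q k a' - cellPoint d m q l b')) / ((q : ℝ) ^ d) ^ 2)
    (j₁ jk jl : ℝ)
    (hj₁ : j₁ = ∑ a : Fin d → Fin q, ∑ b : Fin d → Fin q, (aJ a b) ^ 2)
    (hjk : jk = ∑ a : Fin d → Fin q, ∑ b : Fin d → Fin q, ∑ b' : Fin d → Fin q,
        aJ a b * aJ a b')
    (hjl : jl = ∑ b : Fin d → Fin q, ∑ a : Fin d → Fin q, ∑ a' : Fin d → Fin q,
        aJ a b * aJ a' b)
    (S : ((Fin d → ZMod (m * q)) → Bool) → ℝ)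
    (hS : ∀ σ, S σ = ∑ a : Fin d → Fin q, ∑ b : Fin d → Fin q,
        aJ a b * (spin (σ (cellPoint d m q k a)) * spin (σ (cellPoint d m q l b)))) :
    (∑ σ ∈ fiber d m q η, (S σ) ^ 2) / ((fiber d m q η).card : ℝ)
      = jk * E₂ αl * (1 - E₂ αk) + jl * E₂ αk * (1 - E₂ αl)
        + j₁ * (1 - E₂ αk) * (1 - E₂ αl) :=
  fluctuation_second_moment_general d m q hQ J k l hkl η hη αk αl hαk hαl E₂ hE₂ aJ haJ j₁ jk jl hj₁
    hjk hjl S hS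
end
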